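/- (Sufficiency of current type.) Let g be any strategy profile in the dynamic game with conditionally independent Markovian types, and define for player i the strategy s_t^i(a_t^i | a_{1:t-1}, x_t^i) := P^g(a_t^i | a_{1:t-1}, x_t^i) (the conditional probability of a_t^i given the public history and player i's current type). Then for all t, the joint distribution of (x_t, a_t) under the profile (s^i, g^{-i}) equals that under g: P^{s^i g^{-i}}(x_t, a_t) = P^{g^i g^{-i}}(x_t, a_t). Consequently J^{i, s^i g^{-i}} = J^{i, g}, where J^{i,·} is player i's total expected reward. -/

import Mathlib

open scoped Classical BigOperators

noncomputable section

namespace DynGame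

variable (N T : ℕ) (X A : Fin N → Type)
  [∀ i, Fintype (X i)] [∀ i, Fintype (A i)]

/-- A (behavioral) strategy profile: player `i` at time `t` sees the public action
history and its own private type history and randomizes over its actions. -/
abbrev Strat := ∀ i : Fin N, Fin T → (Fin T → ∀ j, A j) → (Fin T → X i) → A i → ℝ

/-- Probability of a full trajectory `(x_{1:T}, a_{1:T})` under the prior `Q1`,
the conditionally independent controlled Markov kernels `Qk` and the profile `g`. -/
def trajP (Q1 : ∀ i, X i → ℝ)
    (Qk : ∀ i, Fin T → X i → (∀ j, A j) → X i → ℝ)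
    (g : Strat N T X A)
    (x : Fin T → ∀ i, X i) (a : Fin T → ∀ i, A i) : ℝ :=
  (if h : 0 < T then ∏ i, Q1 i (x ⟨0, h⟩ i) else 1) *
  ∏ t : Fin T,
    ((∏ i, g i t a (fun s => x s i) (a t i)) *
     ∏ i, (if h : (t : ℕ) + 1 < T then
              Qk i ⟨(t : ℕ) + 1, h⟩ (x t i) (a t) (x ⟨(t : ℕ) + 1, h⟩ i) else 1))

/-- Causality: the strategy depends only on the strict past of public actions and the
past (including present) of the player's own types. -/
def Causal (g : Strat N T X A) : Prop :=
  ∀ i (t : Fin T) a a' xi xi',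
    (∀ s : Fin T, (s : ℕ) < (t : ℕ) → a s = a' s) →
    (∀ s : Fin T, (s : ℕ) ≤ (t : ℕ) → xi s = xi' s) →
    g i t a xi = g i t a' xi'

/-- The strategy profile is made of probability distributions. -/
def Stochastic (g : Strat N T X A) : Prop :=
  ∀ i t a xi, (∀ b, 0 ≤ g i t a xi b) ∧ (∑ b, g i t a xi b) = 1

def StochKer (Q1 : ∀ i, X i → ℝ) (Qk : ∀ i, Fin T → X i → (∀ j, A j) → X i → ℝ) : Prop :=
  (∀ i, (∀ x, 0 ≤ Q1 i x) ∧ (∑ x, Q1 i x) = 1) ∧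
  (∀ i t x a, (∀ x', 0 ≤ Qk i t x a x') ∧ (∑ x', Qk i t x a x') = 1)

variable (Q1 : ∀ i, X i → ℝ) (Qk : ∀ i, Fin T → X i → (∀ j, A j) → X i → ℝ)

/-- Marginal probability of the public action history `a_{1:t-1}`
(indices `s` with `s+1 ≤ t-1 <-> s+1 < t` in 0-based time). -/
def aMarg (g : Strat N T X A) (t : ℕ) (a : Fin T → ∀ i, A i) : ℝ :=
  ∑ x' : Fin T → ∀ i, X i, ∑ a' : Fin T → ∀ i, A i,
    if (∀ s : Fin T, (s : ℕ) + 1 < t → a' s = a s) then trajP N T X A Q1 Qk g x' a' else 0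

/-- Joint probability of `(x_{1:t}, a_{1:t-1})`. -/
def xaMarg (g : Strat N T X A) (t : ℕ) (x : Fin T → ∀ i, X i) (a : Fin T → ∀ i, A i) : ℝ :=
  ∑ x' : Fin T → ∀ i, X i, ∑ a' : Fin T → ∀ i, A i,
    if (∀ s : Fin T, (s : ℕ) + 1 < t → a' s = a s) ∧ (∀ s : Fin T, (s : ℕ) < t → x' s = x s)
    then trajP N T X A Q1 Qk g x' a' else 0

/-- Joint conditional `P^g(x_{1:t} | a_{1:t-1})`. -/
def condJoint (g : Strat N T X A) (t : ℕ) (x : Fin T → ∀ i, X i) (a : Fin T → ∀ i, A i) : ℝ :=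
  xaMarg N T X A Q1 Qk g t x a / aMarg N T X A Q1 Qk g t a

/-- Probability of `(x_{1:t}^i, a_{1:t-1})` for a single player `i`. -/
def xiMarg (g : Strat N T X A) (i : Fin N) (t : ℕ) (xi : Fin T → X i)
    (a : Fin T → ∀ i, A i) : ℝ :=
  ∑ x' : Fin T → ∀ i, X i, ∑ a' : Fin T → ∀ i, A i,
    if (∀ s : Fin T, (s : ℕ) + 1 < t → a' s = a s) ∧ (∀ s : Fin T, (s : ℕ) < t → x' s i = xi s)
    then trajP N T X A Q1 Qk g x' a' else 0

/-- Player-`i` marginal conditional `P^g(x_{1:t}^i | a_{1:t-1})`. -/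
def condI (g : Strat N T X A) (i : Fin N) (t : ℕ) (xi : Fin T → X i)
    (a : Fin T → ∀ i, A i) : ℝ :=
  xiMarg N T X A Q1 Qk g i t xi a / aMarg N T X A Q1 Qk g t a


/-- Numerator for the structured strategy: `P^g(a_{1:t-1}, x_t^i, a_t^i)`. -/
def sNum (g : Strat N T X A) (i : Fin N) (τ : Fin T)
    (a : Fin T → ∀ j, A j) (xiv : X i) (ai : A i) : ℝ :=
  ∑ x' : Fin T → ∀ j, X j, ∑ a' : Fin T → ∀ j, A j,
    if (∀ s : Fin T, (s : ℕ) < (τ : ℕ) → a' s = a s) ∧ x' τ i = xiv ∧ a' τ i = ai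
    then trajP N T X A Q1 Qk g x' a' else 0

/-- Denominator: `P^g(a_{1:t-1}, x_t^i)`. -/
def sDen (g : Strat N T X A) (i : Fin N) (τ : Fin T)
    (a : Fin T → ∀ j, A j) (xiv : X i) : ℝ :=
  ∑ x' : Fin T → ∀ j, X j, ∑ a' : Fin T → ∀ j, A j,
    if (∀ s : Fin T, (s : ℕ) < (τ : ℕ) → a' s = a s) ∧ x' τ i = xiv
    then trajP N T X A Q1 Qk g x' a' else 0

/-- The structured strategy `s_t^i(a_t^i | a_{1:t-1}, x_t^i) := P^g(a_t^i | a_{1:t-1}, x_t^i)`,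
viewed as a history-based strategy that ignores all of `x_{1:t-1}^i`. -/
def sStrat (g : Strat N T X A) (i : Fin N) :
    Fin T → (Fin T → ∀ j, A j) → (Fin T → X i) → A i → ℝ :=
  fun τ a xi ai => sNum N T X A Q1 Qk g i τ a (xi τ) ai / sDen N T X A Q1 Qk g i τ a (xi τ)

/-- Joint marginal of `(x_t, a_t)`. -/
def margXA (g : Strat N T X A) (τ : Fin T) (x : ∀ j, X j) (av : ∀ j, A j) : ℝ :=
  ∑ x' : Fin T → ∀ j, X j, ∑ a' : Fin T → ∀ j, A j,
    if x' τ = x ∧ a' τ = av then trajP N T X A Q1 Qk g x' a' else 0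

/-- Total expected reward of player `i`. -/
def Jval (g : Strat N T X A) (R : ∀ _ : Fin N, (∀ j, X j) → (∀ j, A j) → ℝ) (i : Fin N) : ℝ :=
  ∑ x' : Fin T → ∀ j, X j, ∑ a' : Fin T → ∀ j, A j,
    trajP N T X A Q1 Qk g x' a' * ∑ τ : Fin T, R i (x' τ) (a' τ)

/-!
Under any profile the probability of a trajectory is a product over the players of factors, each
depending only on the player's own types and strategy and on the public actions. So, given the
public history `a_{1:t-1}`, the players' type histories are independent, and the conditional law
of `a_t^i` given `(a_{1:t-1}, x_t)` is `s_t^i(· | a_{1:t-1}, x_t^i)`. By induction on `t`, player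
`i`'s weight of `(a_{1:t-1}, x_t^i)` is then the same under `(s^i, g^{-i})` as under `g` wherever
the other players' weight of `a_{1:t-1}` is nonzero; where it vanishes, both joint laws vanish.
Hence the laws of `(x_t, a_t)` agree, and so do the expected rewards, which are sums over `t` of
expectations of functions of `(x_t, a_t)`.
-/

open Finset Function

section FunctionSums

variable {ι : Type*} [Fintype ι] [DecidableEq ι]

theorem sum_sum_update_eq_card_mul {β : Type*} [Fintype β] (c : ι) (G : (ι → β) → ℝ) :
    ∑ w : β, ∑ y : ι → β, G (update y c w) = Fintype.card β * ∑ y : ι → β, G y := by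
  have swap : Involutive fun p : (ι → β) × β => (update p.1 c p.2, p.1 c) := by
    rintro ⟨y, w⟩
    simp
  calc ∑ w : β, ∑ y : ι → β, G (update y c w)
      = ∑ p : (ι → β) × β, G (swap.toPerm _ p).1 := by
        rw [Fintype.sum_prod_type, Finset.sum_comm]; rfl
    _ = ∑ p : (ι → β) × β, G p.1 := Equiv.sum_comp swap.toPerm (fun p => G p.1)
    _ = Fintype.card β * ∑ y : ι → β, G y := by
        simp [Fintype.sum_prod_type, Finset.mul_sum]

theorem card_mul_sum_mul_apply {β : Type*} [Fintype β] (c : ι) (F : (ι → β) → ℝ)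
    (K : (ι → β) → β → ℝ) (hF : ∀ y w, F (update y c w) = F y)
    (hK : ∀ y w, K (update y c w) = K y) :
    Fintype.card β * ∑ y : ι → β, F y * K y (y c) = ∑ y : ι → β, F y * ∑ w, K y w := by
  rw [← sum_sum_update_eq_card_mul c, Finset.sum_comm]
  simp only [hF, hK, update_self, Finset.mul_sum]

theorem sum_prod_mul_apply {κ : ι → Type*} [∀ j, Fintype (κ j)] (p : ∀ j, κ j → ℝ) (i : ι)
    (φ : κ i → ℝ) :
    ∑ β : ∀ j, κ j, (∏ j, p j (β j)) * φ (β i)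
      = (∑ u, p i u * φ u) * ∏ j ∈ univ.erase i, ∑ u, p j u := by
  set q : ∀ j, κ j → ℝ := fun j => update (β := fun j => κ j → ℝ) (fun _ _ => 1) i φ j
  have hq : ∀ β : ∀ j, κ j, ∏ j, q j (β j) = φ (β i) := fun β => by
    rw [Fintype.prod_eq_single i fun j hj => by simp [q, update_of_ne hj]]
    simp [q]
  calc ∑ β : ∀ j, κ j, (∏ j, p j (β j)) * φ (β i)
      = ∑ β : ∀ j, κ j, ∏ j, p j (β j) * q j (β j) := by
        simp only [Finset.prod_mul_distrib, hq]
    _ = ∏ j, ∑ u, p j u * q j u := (Fintype.prod_sum fun j u => p j u * q j u).symm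
    _ = (∑ u, p i u * φ u) * ∏ j ∈ univ.erase i, ∑ u, p j u := by
        rw [← Finset.mul_prod_erase _ _ (mem_univ i)]
        congr 1
        · simp [q]
        · refine Finset.prod_congr rfl fun j hj => ?_
          simp [q, update_of_ne (ne_of_mem_erase hj)]

theorem sum_prod_apply_comm {α : Type*} [Fintype α] [DecidableEq α] {κ : ι → Type*}
    [∀ j, Fintype (κ j)] (f : ∀ j, (α → κ j) → ℝ) :
    ∑ x : α → ∀ j, κ j, ∏ j, f j (fun s => x s j) = ∏ j, ∑ y, f j y := by
  rw [Fintype.prod_sum]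
  exact (Equiv.piComm fun (_ : α) j => κ j).sum_comp fun y => ∏ j, f j (y j)

theorem sum_prod_mul_apply_comm {α : Type*} [Fintype α] [DecidableEq α] {κ : ι → Type*}
    [∀ j, Fintype (κ j)] (p : ∀ j, (α → κ j) → ℝ) (i : ι) (φ : (α → κ i) → ℝ) :
    ∑ x : α → ∀ j, κ j, (∏ j, p j (fun s => x s j)) * φ (fun s => x s i)
      = (∑ y, p i y * φ y) * ∏ j ∈ univ.erase i, ∑ y, p j y := by
  rw [← sum_prod_mul_apply (κ := fun j => α → κ j) p i φ]
  exact (Equiv.piComm fun (_ : α) j => κ j).sum_comp fun y => (∏ j, p j (y j)) * φ (y i)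

end FunctionSums

section Model

variable {N T X A}

def transProb (j : Fin N) (t : Fin T) (xj : Fin T → X j) (a : Fin T → ∀ j, A j) : ℝ :=
  if h : (t : ℕ) + 1 < T then Qk j ⟨t + 1, h⟩ (xj t) (a t) (xj ⟨t + 1, h⟩) else 1

-- Player `j`'s factor of the probability of its types at times `≤ t` and the public actions at
-- times `< t` (times are 0-based); `trajP` is the product of these factors over the players.
def playerWeight (h : Strat N T X A) (j : Fin N) (t : ℕ) (xj : Fin T → X j)
    (a : Fin T → ∀ j, A j) : ℝ :=
  (if h0 : 0 < T then Q1 j (xj ⟨0, h0⟩) else 1) *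
    ∏ s ∈ univ.filter (fun s : Fin T => (s : ℕ) < t), h j s a xj (a s j) * transProb Qk j s xj a

def pathWeight (h : Strat N T X A) (t : ℕ) (x : Fin T → ∀ j, X j) (a : Fin T → ∀ j, A j) : ℝ :=
  ∏ j, playerWeight Q1 Qk h j t (fun s => x s j) a

def actionProb (h : Strat N T X A) (t : Fin T) (x : Fin T → ∀ j, X j) (a : Fin T → ∀ j, A j)
    (β : ∀ j, A j) : ℝ :=
  ∏ j, h j t a (fun s => x s j) (β j)

variable {Q1 Qk}

omit [∀ i, Fintype (X i)] in
theorem Stochastic.nonneg {g : Strat N T X A} (hg : Stochastic N T X A g) :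
    ∀ j t a xj b, 0 ≤ g j t a xj b :=
  fun j t a xj b => (hg j t a xj).1 b

omit [∀ i, Fintype (X i)] [∀ i, Fintype (A i)] in
theorem trajP_eq_pathWeight (h : Strat N T X A) (x : Fin T → ∀ j, X j)
    (a : Fin T → ∀ j, A j) :
    trajP N T X A Q1 Qk h x a = pathWeight Q1 Qk h T x a := by
  have hT : ∀ s : Fin T, (s : ℕ) < T := Fin.is_lt
  simp only [trajP, pathWeight, playerWeight, transProb, hT, Finset.filter_true_of_mem, mem_univ,
    implies_true, Finset.prod_mul_distrib]
  rw [Finset.prod_comm (s := univ) (t := univ) (f := fun j s => h j s a _ (a s j)),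
    Finset.prod_comm (s := univ) (t := univ) (f := fun j (s : Fin T) => dite _ _ _)]
  by_cases h0 : 0 < T <;> simp [h0]

omit [∀ i, Fintype (X i)] [∀ i, Fintype (A i)] in
theorem playerWeight_zero (h : Strat N T X A) (j : Fin N) (xj : Fin T → X j)
    (a : Fin T → ∀ j, A j) :
    playerWeight Q1 Qk h j 0 xj a = if h0 : 0 < T then Q1 j (xj ⟨0, h0⟩) else 1 := by
  simp [playerWeight]

omit [∀ i, Fintype (X i)] [∀ i, Fintype (A i)] in
theorem playerWeight_succ (h : Strat N T X A) (j : Fin N) (s : Fin T) (xj : Fin T → X j)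
    (a : Fin T → ∀ j, A j) :
    playerWeight Q1 Qk h j (s + 1) xj a
      = playerWeight Q1 Qk h j s xj a * (h j s a xj (a s j) * transProb Qk j s xj a) := by
  have hs : (univ.filter fun r : Fin T => (r : ℕ) < s + 1)
      = insert s (univ.filter fun r : Fin T => (r : ℕ) < s) := by
    ext r
    simp only [mem_filter, mem_insert, mem_univ, true_and, ← Fin.val_inj]
    omega
  rw [playerWeight, playerWeight, hs, Finset.prod_insert (by simp)]
  ring

omit [∀ i, Fintype (X i)] [∀ i, Fintype (A i)] in
theorem playerWeight_congr_strategy {h h' : Strat N T X A} {j : Fin N} (hj : h j = h' j) (t : ℕ)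
    (xj : Fin T → X j) (a : Fin T → ∀ j, A j) :
    playerWeight Q1 Qk h j t xj a = playerWeight Q1 Qk h' j t xj a := by
  simp only [playerWeight, hj]

omit [∀ i, Fintype (X i)] [∀ i, Fintype (A i)] in
theorem playerWeight_congr {h : Strat N T X A} (hc : Causal N T X A h) (j : Fin N) {t : ℕ}
    {xj xj' : Fin T → X j} {a a' : Fin T → ∀ j, A j}
    (hx : ∀ s : Fin T, (s : ℕ) ≤ t → xj s = xj' s) (ha : ∀ s : Fin T, (s : ℕ) < t → a s = a' s) :
    playerWeight Q1 Qk h j t xj a = playerWeight Q1 Qk h j t xj' a' := by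
  unfold playerWeight transProb
  congr 1
  · split_ifs with h0
    · rw [hx _ (Nat.zero_le t)]
    · rfl
  · refine Finset.prod_congr rfl fun s hs => ?_
    have hst : (s : ℕ) < t := (mem_filter.1 hs).2
    rw [hc j s a a' xj xj' (fun r hr => ha r (hr.trans hst)) (fun r hr => hx r (by omega)),
      ha s hst]
    split_ifs with h1
    · rw [hx s hst.le, hx ⟨s + 1, h1⟩ hst]
    · rfl

omit [∀ i, Fintype (A i)] in
theorem playerWeight_nonneg {h : Strat N T X A} (hh : ∀ j t a xj b, 0 ≤ h j t a xj b)
    (hK : StochKer N T X A Q1 Qk) (j : Fin N) (t : ℕ) (xj : Fin T → X j)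
    (a : Fin T → ∀ j, A j) : 0 ≤ playerWeight Q1 Qk h j t xj a := by
  unfold playerWeight transProb
  refine mul_nonneg ?_ (prod_nonneg fun s _ => mul_nonneg (hh _ _ _ _ _) ?_)
  · split_ifs
    exacts [(hK.1 j).1 _, zero_le_one]
  · split_ifs
    exacts [(hK.2 j _ _ _).1 _, zero_le_one]

omit [∀ i, Fintype (A i)] in
theorem trajP_nonneg {h : Strat N T X A} (hh : ∀ j t a xj b, 0 ≤ h j t a xj b)
    (hK : StochKer N T X A Q1 Qk) (x : Fin T → ∀ j, X j) (a : Fin T → ∀ j, A j) :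
    0 ≤ trajP N T X A Q1 Qk h x a := by
  rw [trajP_eq_pathWeight]
  exact Finset.prod_nonneg fun j _ => playerWeight_nonneg hh hK j T _ a

omit [∀ i, Fintype (X i)] [∀ i, Fintype (A i)] in
theorem pathWeight_succ (h : Strat N T X A) (s : Fin T) (x : Fin T → ∀ j, X j)
    (a : Fin T → ∀ j, A j) :
    pathWeight Q1 Qk h (s + 1) x a
      = pathWeight Q1 Qk h s x a * actionProb h s x a (a s) *
          ∏ j, transProb Qk j s (fun r => x r j) a := by
  simp only [pathWeight, actionProb, playerWeight_succ, Finset.prod_mul_distrib, mul_assoc]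

omit [∀ i, Fintype (X i)] [∀ i, Fintype (A i)] in
theorem pathWeight_congr {h : Strat N T X A} (hc : Causal N T X A h) {t : ℕ}
    {x x' : Fin T → ∀ j, X j} {a a' : Fin T → ∀ j, A j}
    (hx : ∀ s : Fin T, (s : ℕ) ≤ t → x s = x' s) (ha : ∀ s : Fin T, (s : ℕ) < t → a s = a' s) :
    pathWeight Q1 Qk h t x a = pathWeight Q1 Qk h t x' a' :=
  Finset.prod_congr rfl fun j _ => playerWeight_congr hc j (fun s hs => by rw [hx s hs]) ha

omit [∀ i, Fintype (X i)] [∀ i, Fintype (A i)] in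
theorem actionProb_congr {h : Strat N T X A} (hc : Causal N T X A h) {t : Fin T}
    {x x' : Fin T → ∀ j, X j} {a a' : Fin T → ∀ j, A j}
    (hx : ∀ s : Fin T, s ≤ t → x s = x' s) (ha : ∀ s : Fin T, s < t → a s = a' s) :
    actionProb h t x a = actionProb h t x' a' := by
  funext β
  exact Finset.prod_congr rfl fun j _ => by
    rw [hc j t a a' _ (fun r => x' r j) ha fun s hs => by rw [hx s hs]]

variable (N T X A) in
def DependsUpTo (t : ℕ) (G : (Fin T → ∀ j, X j) → (Fin T → ∀ j, A j) → ℝ) : Prop :=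
  ∀ x x' a a', (∀ s : Fin T, (s : ℕ) ≤ t → x s = x' s) → (∀ s : Fin T, (s : ℕ) ≤ t → a s = a' s) →
    G x a = G x' a'

omit [∀ i, Fintype (X i)] [∀ i, Fintype (A i)] in
theorem DependsUpTo.update_left {t : ℕ} {G : (Fin T → ∀ j, X j) → (Fin T → ∀ j, A j) → ℝ}
    (hG : DependsUpTo N T X A t G) {c : Fin T} (hc : t < c) (x a) (w : ∀ j, X j) :
    G (update x c w) a = G x a :=
  hG _ _ _ _ (fun s hs => update_of_ne (fun h => by omega) _ _) fun _ _ => rfl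

omit [∀ i, Fintype (X i)] [∀ i, Fintype (A i)] in
theorem DependsUpTo.update_right {t : ℕ} {G : (Fin T → ∀ j, X j) → (Fin T → ∀ j, A j) → ℝ}
    (hG : DependsUpTo N T X A t G) {c : Fin T} (hc : t < c) (x a) (w : ∀ j, A j) :
    G x (update a c w) = G x a :=
  hG _ _ _ _ (fun _ _ => rfl) fun s hs => update_of_ne (fun h => by omega) _ _

omit [∀ i, Fintype (X i)] [∀ i, Fintype (A i)] in
theorem DependsUpTo.mono {t t' : ℕ} {G : (Fin T → ∀ j, X j) → (Fin T → ∀ j, A j) → ℝ}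
    (hG : DependsUpTo N T X A t G) (htt' : t ≤ t') : DependsUpTo N T X A t' G :=
  fun x x' a a' hx ha => hG x x' a a' (fun s hs => hx s (hs.trans htt'))
    fun s hs => ha s (hs.trans htt')

-- `sStrat` is `0 / 0 = 0` wherever `sDen` vanishes, so the modified profile randomizes properly
-- only at histories of nonzero weight; summing out the future needs no more.
variable (Q1 Qk) in
def StochasticOnSupport (h : Strat N T X A) : Prop :=
  ∀ (t : Fin T) x a, pathWeight Q1 Qk h t x a ≠ 0 → ∑ β, actionProb h t x a β = 1

omit [∀ i, Fintype (X i)] in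
theorem stochasticOnSupport_of_stochastic {g : Strat N T X A} (hg : Stochastic N T X A g) :
    StochasticOnSupport Q1 Qk g := fun t x a _ => by
  simp only [actionProb, ← Fintype.prod_sum, (hg _ _ _ _).2, Finset.prod_const_one]

theorem card_mul_sum_pathWeight_succ {h : Strat N T X A} (hc : Causal N T X A h)
    (hK : StochKer N T X A Q1 Qk) {t : Fin T} (ht : (t : ℕ) + 1 < T)
    {G : (Fin T → ∀ j, X j) → (Fin T → ∀ j, A j) → ℝ}
    (hG : ∀ x a w, G (update x ⟨t + 1, ht⟩ w) a = G x a) :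
    Fintype.card (∀ j, X j) * ∑ x, ∑ a, pathWeight Q1 Qk h (t + 1) x a * G x a
      = ∑ x, ∑ a, pathWeight Q1 Qk h t x a * actionProb h t x a (a t) * G x a := by
  set c : Fin T := ⟨t + 1, ht⟩
  have hct : t ≠ c := Fin.ne_of_val_ne (by show (t : ℕ) ≠ t + 1; omega)
  rw [Finset.sum_comm, Finset.mul_sum, Finset.sum_comm]
  refine Finset.sum_congr rfl fun a _ => ?_
  have key := card_mul_sum_mul_apply c
    (fun x => pathWeight Q1 Qk h t x a * actionProb h t x a (a t) * G x a)
    (fun x w => ∏ j, Qk j c (x t j) (a t) (w j))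
    (fun x w => by
      rw [hG, pathWeight_congr hc (x' := x) (fun s hs => update_of_ne
          (Fin.ne_of_val_ne (by show (s : ℕ) ≠ t + 1; omega)) _ _) fun _ _ => rfl,
        actionProb_congr hc (x' := x) (fun s hs => update_of_ne
          (Fin.ne_of_val_ne (by show (s : ℕ) ≠ t + 1; omega)) _ _) fun _ _ => rfl])
    (fun x w => by simp [update_of_ne hct])
  simp only [← Fintype.prod_sum, (hK.2 _ _ _ _).2, Finset.prod_const_one, mul_one] at key
  rw [← key]
  refine congrArg _ (Finset.sum_congr rfl fun x _ => ?_)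
  rw [pathWeight_succ]
  simp only [transProb, dif_pos ht]
  ring

theorem card_mul_sum_actionProb {h : Strat N T X A} (hc : Causal N T X A h) (t : Fin T)
    {G : (Fin T → ∀ j, X j) → (Fin T → ∀ j, A j) → ℝ} (hG : ∀ x a w, G x (update a t w) = G x a)
    (φ : (∀ j, A j) → ℝ) :
    Fintype.card (∀ j, A j) *
        ∑ x, ∑ a, pathWeight Q1 Qk h t x a * actionProb h t x a (a t) * (G x a * φ (a t))
      = ∑ x, ∑ a, pathWeight Q1 Qk h t x a * G x a * ∑ β, actionProb h t x a β * φ β := by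
  rw [Finset.mul_sum]
  refine Finset.sum_congr rfl fun x _ => ?_
  simp only [mul_mul_mul_comm _ (actionProb _ _ _ _ _)]
  exact card_mul_sum_mul_apply t (fun a => pathWeight Q1 Qk h t x a * G x a)
    (fun a β => actionProb h t x a β * φ β)
    (fun a w => by
      rw [hG, pathWeight_congr hc (a' := a) (fun _ _ => rfl) fun s hs => update_of_ne
        (fun h => by simp [← h] at hs) _ _])
    (fun a w => by
      rw [actionProb_congr hc (a' := a) (fun _ _ => rfl) fun s hs => update_of_ne
        (fun h => by simp [← h] at hs) _ _])

theorem card_mul_sum_pathWeight_actionProb {h : Strat N T X A} (hc : Causal N T X A h)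
    (hs : StochasticOnSupport Q1 Qk h) (t : Fin T)
    {G : (Fin T → ∀ j, X j) → (Fin T → ∀ j, A j) → ℝ} (hG : ∀ x a w, G x (update a t w) = G x a) :
    Fintype.card (∀ j, A j) * ∑ x, ∑ a, pathWeight Q1 Qk h t x a * actionProb h t x a (a t) * G x a
      = ∑ x, ∑ a, pathWeight Q1 Qk h t x a * G x a := by
  calc _ = Fintype.card (∀ j, A j) *
        ∑ x, ∑ a, pathWeight Q1 Qk h t x a * actionProb h t x a (a t) * (G x a * 1) := by
        simp only [mul_one]
    _ = ∑ x, ∑ a, pathWeight Q1 Qk h t x a * G x a * ∑ β, actionProb h t x a β * 1 :=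
        card_mul_sum_actionProb hc t hG fun _ => 1
    _ = _ := by
        refine Finset.sum_congr rfl fun x _ => Finset.sum_congr rfl fun a _ => ?_
        by_cases hw : pathWeight Q1 Qk h t x a = 0
        · simp [hw]
        · rw [Finset.sum_congr rfl fun β _ => mul_one _, hs t x a hw, mul_one]

-- Trajectories range over all of `Fin T → _` and the test function ignores times after `t`,
-- so summing out those times leaves a power of cardinalities.
theorem card_pow_mul_sum_trajP {h : Strat N T X A} (hc : Causal N T X A h)
    (hs : StochasticOnSupport Q1 Qk h) (hK : StochKer N T X A Q1 Qk) (t : Fin T)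
    {G : (Fin T → ∀ j, X j) → (Fin T → ∀ j, A j) → ℝ} (hG : DependsUpTo N T X A t G) :
    ((Fintype.card (∀ j, X j) * Fintype.card (∀ j, A j) : ℕ) : ℝ) ^ (T - 1 - t) *
        ∑ x, ∑ a, trajP N T X A Q1 Qk h x a * G x a
      = ∑ x, ∑ a, pathWeight Q1 Qk h t x a * actionProb h t x a (a t) * G x a := by
  obtain ⟨k, hk⟩ : ∃ k, T - 1 - t = k := ⟨_, rfl⟩
  induction k generalizing t with
  | zero =>
    have hT : (t : ℕ) + 1 = T := by omega
    rw [hk, pow_zero, one_mul]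
    refine Finset.sum_congr rfl fun x _ => Finset.sum_congr rfl fun a _ => ?_
    rw [trajP_eq_pathWeight, ← congrArg (fun n => pathWeight Q1 Qk h n x a) hT, pathWeight_succ]
    simp [transProb, hT]
  | succ k ih =>
    have ht : (t : ℕ) + 1 < T := by omega
    have hG' := hG.mono (Nat.le_succ t)
    calc _ = Fintype.card (∀ j, X j) * (Fintype.card (∀ j, A j) *
          (((Fintype.card (∀ j, X j) * Fintype.card (∀ j, A j) : ℕ) : ℝ) ^ (T - 1 - (t + 1)) *
            ∑ x, ∑ a, trajP N T X A Q1 Qk h x a * G x a)) := by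
          rw [hk, show T - 1 - (t + 1) = k by omega, pow_succ]; push_cast; ring
      _ = Fintype.card (∀ j, X j) * ∑ x, ∑ a, pathWeight Q1 Qk h (t + 1) x a * G x a := by
          rw [ih ⟨t + 1, ht⟩ hG' (by show T - 1 - (t + 1) = k; omega),
            card_mul_sum_pathWeight_actionProb hc hs _
              fun x a w => hG.update_right (Nat.lt_succ_self _) x a w]
      _ = _ := card_mul_sum_pathWeight_succ hc hK ht fun x a w =>
          hG.update_left (Nat.lt_succ_self _) x a w

variable (Q1 Qk) in
def typeWeight (h : Strat N T X A) (j : Fin N) (t : Fin T) (a : Fin T → ∀ j, A j) (u : X j) : ℝ :=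
  ∑ xj ∈ univ.filter (fun xj : Fin T → X j => xj t = u), playerWeight Q1 Qk h j t xj a

variable (Q1 Qk) in
def typeActionWeight (h : Strat N T X A) (j : Fin N) (t : Fin T) (a : Fin T → ∀ j, A j)
    (u : X j) (b : A j) : ℝ :=
  ∑ xj ∈ univ.filter (fun xj : Fin T → X j => xj t = u),
    playerWeight Q1 Qk h j t xj a * h j t a xj b

variable (Q1 Qk) in
def othersWeight (g : Strat N T X A) (i : Fin N) (t : ℕ) (a : Fin T → ∀ j, A j) : ℝ :=
  ∏ j ∈ univ.erase i, ∑ xj, playerWeight Q1 Qk g j t xj a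

theorem card_pow_mul_margXA {h : Strat N T X A} (hc : Causal N T X A h)
    (hs : StochasticOnSupport Q1 Qk h) (hK : StochKer N T X A Q1 Qk) (t : Fin T)
    (v : ∀ j, X j) (β : ∀ j, A j) :
    ((Fintype.card (∀ j, X j) * Fintype.card (∀ j, A j) : ℕ) : ℝ) ^ (T - 1 - t) *
        margXA N T X A Q1 Qk h t v β
      = ∑ a, if a t = β then ∏ j, typeActionWeight Q1 Qk h j t a (v j) (β j) else 0 := by
  have hG : DependsUpTo N T X A t fun x a => if x t = v ∧ a t = β then 1 else 0 :=
    fun x x' a a' hx ha => by dsimp only; rw [hx t le_rfl, ha t le_rfl]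
  have hm : margXA N T X A Q1 Qk h t v β
      = ∑ x, ∑ a, trajP N T X A Q1 Qk h x a * if x t = v ∧ a t = β then 1 else 0 := by
    simp only [margXA, mul_boole]
  rw [hm, card_pow_mul_sum_trajP hc hs hK t hG, Finset.sum_comm]
  refine Finset.sum_congr rfl fun a _ => ?_
  split_ifs with ha
  · simp only [typeActionWeight, Finset.sum_filter, ← sum_prod_apply_comm]
    refine Finset.sum_congr rfl fun x _ => ?_
    simp only [ha, and_true, mul_boole, funext_iff, pathWeight, actionProb,
      ← Finset.prod_mul_distrib, Finset.prod_ite_zero, mem_univ, true_implies]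
  · simp [ha]

omit [∀ i, Fintype (A i)] in
theorem sum_ite_pathWeight_mul (h : Strat N T X A) (i : Fin N) (t : Fin T)
    (a : Fin T → ∀ j, A j) (v : X i) (b : A i) :
    ∑ x, (if x t i = v then pathWeight Q1 Qk h t x a * h i t a (fun s => x s i) b else 0)
      = typeActionWeight Q1 Qk h i t a v b * othersWeight Q1 Qk h i t a := by
  have key := sum_prod_mul_apply_comm (fun j xj => playerWeight Q1 Qk h j t xj a) i
    fun xi => if xi t = v then h i t a xi b else 0
  simp only [mul_ite, mul_zero] at key
  rw [typeActionWeight, othersWeight, Finset.sum_filter, ← key]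
  rfl

omit [∀ i, Fintype (A i)] in
theorem typeActionWeight_congr {h : Strat N T X A} (hc : Causal N T X A h) (j : Fin N) (t : Fin T)
    {a a' : Fin T → ∀ j, A j} (ha : ∀ s : Fin T, (s : ℕ) < t → a s = a' s) (u : X j) (b : A j) :
    typeActionWeight Q1 Qk h j t a u b = typeActionWeight Q1 Qk h j t a' u b :=
  Finset.sum_congr rfl fun xj _ => by
    rw [playerWeight_congr hc j (fun _ _ => rfl) ha, hc j t a a' xj xj ha fun _ _ => rfl]

omit [∀ i, Fintype (A i)] in
theorem othersWeight_congr {h : Strat N T X A} (hc : Causal N T X A h) (i : Fin N) {t : ℕ}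
    {a a' : Fin T → ∀ j, A j} (ha : ∀ s : Fin T, (s : ℕ) < t → a s = a' s) :
    othersWeight Q1 Qk h i t a = othersWeight Q1 Qk h i t a' :=
  Finset.prod_congr rfl fun j _ =>
    Finset.sum_congr rfl fun _ _ => playerWeight_congr hc j (fun _ _ => rfl) ha

omit [∀ i, Fintype (A i)] in
theorem typeActionWeight_congr_strategy {h h' : Strat N T X A} {j : Fin N} (hj : h j = h' j)
    (t : Fin T) (a : Fin T → ∀ j, A j) (u : X j) (b : A j) :
    typeActionWeight Q1 Qk h j t a u b = typeActionWeight Q1 Qk h' j t a u b := by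
  simp only [typeActionWeight, playerWeight_congr_strategy hj, hj]

omit [∀ i, Fintype (A i)] in
theorem typeWeight_congr_of_val_eq_zero (h h' : Strat N T X A) (j : Fin N) {t : Fin T}
    (ht : (t : ℕ) = 0) (a : Fin T → ∀ j, A j) (u : X j) :
    typeWeight Q1 Qk h j t a u = typeWeight Q1 Qk h' j t a u := by
  simp only [typeWeight, ht, playerWeight_zero]

theorem sum_typeActionWeight {h : Strat N T X A} (hh : Stochastic N T X A h) (j : Fin N)
    (t : Fin T) (a : Fin T → ∀ j, A j) (u : X j) :
    ∑ b, typeActionWeight Q1 Qk h j t a u b = typeWeight Q1 Qk h j t a u := by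
  simp only [typeActionWeight, typeWeight]
  rw [Finset.sum_comm]
  simp only [← Finset.mul_sum, (hh _ _ _ _).2, mul_one]

omit [∀ i, Fintype (A i)] in
theorem card_mul_typeWeight_succ {h : Strat N T X A} (hc : Causal N T X A h) (j : Fin N)
    {t : Fin T} (ht : (t : ℕ) + 1 < T) (a : Fin T → ∀ j, A j) (y : X j) :
    Fintype.card (X j) * typeWeight Q1 Qk h j ⟨t + 1, ht⟩ a y
      = ∑ u, typeActionWeight Q1 Qk h j t a u (a t j) * Qk j ⟨t + 1, ht⟩ u (a t) y := by
  set c : Fin T := ⟨t + 1, ht⟩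
  have hct : t ≠ c := Fin.ne_of_val_ne (by show (t : ℕ) ≠ t + 1; omega)
  have key := card_mul_sum_mul_apply c
    (fun xj => playerWeight Q1 Qk h j t xj a * h j t a xj (a t j))
    (fun xj w => if w = y then Qk j c (xj t) (a t) w else 0)
    (fun xj w => by
      rw [playerWeight_congr hc j (xj' := xj) (fun s hs => update_of_ne
          (Fin.ne_of_val_ne (by show (s : ℕ) ≠ t + 1; omega)) _ _) fun _ _ => rfl,
        hc j t a a _ xj (fun _ _ => rfl) fun s hs => update_of_ne
          (Fin.ne_of_val_ne (by show (s : ℕ) ≠ t + 1; omega)) _ _])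
    (fun xj w => by simp [update_of_ne hct])
  simp only [Finset.sum_ite_eq', mem_univ, if_true] at key
  calc _ = Fintype.card (X j) * ∑ xj, playerWeight Q1 Qk h j t xj a * h j t a xj (a t j) *
        (if xj c = y then Qk j c (xj t) (a t) (xj c) else 0) := by
        rw [typeWeight, Finset.sum_filter]
        refine congrArg _ (Finset.sum_congr rfl fun xj _ => ?_)
        split_ifs
        · rw [show ((c : Fin T) : ℕ) = (t : ℕ) + 1 from rfl, playerWeight_succ, transProb,
            dif_pos ht, mul_assoc]
        · rw [mul_zero]
    _ = ∑ xj, playerWeight Q1 Qk h j t xj a * h j t a xj (a t j) * Qk j c (xj t) (a t) y := key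
    _ = ∑ u, ∑ xj ∈ univ.filter (fun xj : Fin T → X j => xj t = u),
          playerWeight Q1 Qk h j t xj a * h j t a xj (a t j) * Qk j c (xj t) (a t) y :=
        (Finset.sum_fiberwise _ _ _).symm
    _ = _ := by
        simp only [typeActionWeight, Finset.sum_mul]
        exact Finset.sum_congr rfl fun u _ => Finset.sum_congr rfl fun xj hxj => by
          rw [(mem_filter.1 hxj).2]

omit [∀ i, Fintype (A i)] in
theorem typeActionWeight_eq_zero_of_typeWeight_eq_zero {h : Strat N T X A}
    (hh : ∀ j t a xj b, 0 ≤ h j t a xj b) (hK : StochKer N T X A Q1 Qk) {j : Fin N} {t : Fin T}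
    {a : Fin T → ∀ j, A j} {u : X j} (hz : typeWeight Q1 Qk h j t a u = 0) (b : A j) :
    typeActionWeight Q1 Qk h j t a u b = 0 := by
  rw [typeWeight,
    Finset.sum_eq_zero_iff_of_nonneg fun xj _ => playerWeight_nonneg hh hK j t xj a] at hz
  exact Finset.sum_eq_zero fun xj hxj => by rw [hz xj hxj, zero_mul]

theorem othersWeight_ne_zero_of_succ {g : Strat N T X A} (hg : Stochastic N T X A g)
    (hK : StochKer N T X A Q1 Qk) (i : Fin N) {t : Fin T} {a : Fin T → ∀ j, A j}
    (ho : othersWeight Q1 Qk g i (t + 1) a ≠ 0) : othersWeight Q1 Qk g i t a ≠ 0 := by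
  intro hz
  obtain ⟨j, hj, hzj⟩ := Finset.prod_eq_zero_iff.1 hz
  rw [Finset.sum_eq_zero_iff_of_nonneg fun xj _ =>
    playerWeight_nonneg hg.nonneg hK j t xj a] at hzj
  exact ho (Finset.prod_eq_zero hj (Finset.sum_eq_zero fun xj _ => by
    rw [playerWeight_succ, hzj xj (mem_univ _), zero_mul]))

omit [∀ i, Fintype (X i)] in
theorem sum_actionProb_mul_ite {g : Strat N T X A} (hg : Stochastic N T X A g) (t : Fin T)
    (x : Fin T → ∀ j, X j) (a : Fin T → ∀ j, A j) (i : Fin N) (b : A i) :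
    ∑ β, actionProb g t x a β * (if β i = b then 1 else 0) = g i t a (fun s => x s i) b := by
  simp only [actionProb]
  rw [sum_prod_mul_apply (fun j => g j t a fun s => x s j) i fun u => if u = b then 1 else 0]
  simp [(hg _ _ _ _).2]

theorem card_mul_card_pow_mul_sNum {g : Strat N T X A} (hg : Stochastic N T X A g)
    (hc : Causal N T X A g) (hK : StochKer N T X A Q1 Qk) (i : Fin N) (t : Fin T)
    (a : Fin T → ∀ j, A j) (v : X i) (b : A i) :
    Fintype.card (∀ j, A j) *
        (((Fintype.card (∀ j, X j) * Fintype.card (∀ j, A j) : ℕ) : ℝ) ^ (T - 1 - t) *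
          sNum N T X A Q1 Qk g i t a v b)
      = ∑ a', if ∀ s : Fin T, (s : ℕ) < t → a' s = a s then
          typeActionWeight Q1 Qk g i t a' v b * othersWeight Q1 Qk g i t a' else 0 := by
  set G : (Fin T → ∀ j, X j) → (Fin T → ∀ j, A j) → ℝ := fun x a' =>
    if (∀ s : Fin T, (s : ℕ) < t → a' s = a s) ∧ x t i = v then 1 else 0
  have hG : ∀ x a' w, G x (update a' t w) = G x a' := fun x a' w => by
    simp only [G]
    congr 2
    refine propext (forall_congr' fun s => imp_congr_right fun hs => ?_)
    rw [update_of_ne (by rintro rfl; exact lt_irrefl _ hs)]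
  have hm : sNum N T X A Q1 Qk g i t a v b
      = ∑ x, ∑ a', trajP N T X A Q1 Qk g x a' * (G x a' * if a' t i = b then 1 else 0) := by
    refine Finset.sum_congr rfl fun x _ => Finset.sum_congr rfl fun a' _ => ?_
    by_cases h1 : (∀ s : Fin T, (s : ℕ) < t → a' s = a s) ∧ x t i = v <;>
      by_cases h2 : a' t i = b <;> simp [G, h1, h2]
  have hdep : DependsUpTo N T X A t fun x a' => G x a' * if a' t i = b then 1 else 0 := by
    intro x x' a₁ a₂ hx ha
    simp only [G, hx t le_rfl, ha t le_rfl]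
    congr 3
    exact propext (forall_congr' fun s => imp_congr_right fun hs => by rw [ha s hs.le])
  rw [hm, card_pow_mul_sum_trajP hc (stochasticOnSupport_of_stochastic hg) hK t hdep,
    card_mul_sum_actionProb hc t hG fun β => if β i = b then 1 else 0]
  simp only [sum_actionProb_mul_ite hg]
  rw [Finset.sum_comm]
  refine Finset.sum_congr rfl fun a' _ => ?_
  by_cases hP : ∀ s : Fin T, (s : ℕ) < t → a' s = a s
  · rw [if_pos hP, ← sum_ite_pathWeight_mul]
    refine Finset.sum_congr rfl fun x _ => ?_
    simp only [G, and_iff_right hP]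
    split_ifs <;> simp
  · simp only [G, hP, false_and, if_false, zero_mul, mul_zero, Finset.sum_const_zero]

theorem sNum_eq_mul [∀ j, Nonempty (X j)] {g : Strat N T X A} (hg : Stochastic N T X A g)
    (hc : Causal N T X A g) (hK : StochKer N T X A Q1 Qk) (i : Fin N) (t : Fin T)
    (a : Fin T → ∀ j, A j) :
    ∃ c : ℝ, c ≠ 0 ∧ ∀ v b, sNum N T X A Q1 Qk g i t a v b
      = c * othersWeight Q1 Qk g i t a * typeActionWeight Q1 Qk g i t a v b := by
  set n : ℕ := #(univ.filter fun a' : Fin T → ∀ j, A j => ∀ s : Fin T, (s : ℕ) < t → a' s = a s)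
  have hn : n ≠ 0 := Finset.card_ne_zero.2 ⟨a, by simp⟩
  have : Nonempty (∀ j, A j) := ⟨a t⟩
  have hA : Fintype.card (∀ j, A j) ≠ 0 := Fintype.card_ne_zero
  have hX : Fintype.card (∀ j, X j) ≠ 0 := Fintype.card_ne_zero
  refine ⟨n / (Fintype.card (∀ j, A j) *
    ((Fintype.card (∀ j, X j) * Fintype.card (∀ j, A j) : ℕ) : ℝ) ^ (T - 1 - t)),
    by positivity, fun v b => ?_⟩
  have key := card_mul_card_pow_mul_sNum (Q1 := Q1) hg hc hK i t a v b
  rw [Finset.sum_congr rfl fun a' _ => by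
      rw [← ite_congr rfl (fun hP => by rw [typeActionWeight_congr hc i t hP,
        othersWeight_congr hc i hP]) fun _ => rfl], Finset.sum_ite, Finset.sum_const_zero,
    add_zero, Finset.sum_const, nsmul_eq_mul] at key
  field_simp
  linear_combination key

theorem sDen_eq_sum_sNum (g : Strat N T X A) (i : Fin N) (t : Fin T) (a : Fin T → ∀ j, A j)
    (v : X i) : sDen N T X A Q1 Qk g i t a v = ∑ b, sNum N T X A Q1 Qk g i t a v b := by
  simp only [sDen, sNum]
  rw [eq_comm, Finset.sum_comm]
  refine Finset.sum_congr rfl fun x _ => ?_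
  rw [Finset.sum_comm]
  refine Finset.sum_congr rfl fun a' _ => ?_
  by_cases hC : (∀ s : Fin T, (s : ℕ) < t → a' s = a s) ∧ x t i = v
  · simp only [← and_assoc, and_iff_right hC, if_pos hC, Finset.sum_ite_eq, mem_univ, if_true]
  · simp only [← and_assoc, hC, false_and, if_false, Finset.sum_const_zero]

theorem sStrat_eq_div [∀ j, Nonempty (X j)] {g : Strat N T X A} (hg : Stochastic N T X A g)
    (hc : Causal N T X A g) (hK : StochKer N T X A Q1 Qk) (i : Fin N) (t : Fin T)
    (a : Fin T → ∀ j, A j) (ho : othersWeight Q1 Qk g i t a ≠ 0) (xi : Fin T → X i) (b : A i) :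
    sStrat N T X A Q1 Qk g i t a xi b
      = typeActionWeight Q1 Qk g i t a (xi t) b / typeWeight Q1 Qk g i t a (xi t) := by
  obtain ⟨c, hc0, hs⟩ := sNum_eq_mul hg hc hK i t a
  rw [sStrat, sDen_eq_sum_sNum]
  simp only [hs, ← Finset.mul_sum, sum_typeActionWeight hg]
  exact mul_div_mul_left _ _ (mul_ne_zero hc0 ho)

theorem sStrat_nonneg {g : Strat N T X A} (hg : Stochastic N T X A g)
    (hK : StochKer N T X A Q1 Qk) (i : Fin N) (t : Fin T) (a : Fin T → ∀ j, A j)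
    (xi : Fin T → X i) (b : A i) : 0 ≤ sStrat N T X A Q1 Qk g i t a xi b := by
  have hP := trajP_nonneg hg.nonneg hK
  exact div_nonneg (Finset.sum_nonneg fun x _ => Finset.sum_nonneg fun a' _ => by
      split_ifs <;> simp [hP]) (Finset.sum_nonneg fun x _ => Finset.sum_nonneg fun a' _ => by
      split_ifs <;> simp [hP])

theorem update_sStrat_nonneg {g : Strat N T X A} (hg : Stochastic N T X A g)
    (hK : StochKer N T X A Q1 Qk) (i : Fin N) :
    ∀ j t a xj b, 0 ≤ update g i (sStrat N T X A Q1 Qk g i) j t a xj b := by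
  intro j t a xj b
  by_cases hj : j = i
  · subst hj
    simpa using sStrat_nonneg hg hK j t a xj b
  · rw [update_of_ne hj]
    exact hg.nonneg j t a xj b

theorem causal_update_sStrat {g : Strat N T X A} (hc : Causal N T X A g) (i : Fin N) :
    Causal N T X A (update g i (sStrat N T X A Q1 Qk g i)) := by
  intro j t a a' xj xj' ha hx
  by_cases hj : j = i
  · subst hj
    have hpre : ∀ a'' : Fin T → ∀ j, A j, (∀ s : Fin T, (s : ℕ) < t → a'' s = a s) ↔
        ∀ s : Fin T, (s : ℕ) < t → a'' s = a' s :=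
      fun a'' => forall_congr' fun s => imp_congr_right fun hs => by rw [ha s hs]
    funext b
    simp only [update_self, sStrat, sNum, sDen, hpre, hx t le_rfl]
  · simp only [update_of_ne hj]
    exact hc j t a a' xj xj' ha hx

theorem typeActionWeight_update_eq [∀ j, Nonempty (X j)] {g : Strat N T X A}
    (hg : Stochastic N T X A g) (hc : Causal N T X A g) (hK : StochKer N T X A Q1 Qk) {i : Fin N}
    {t : Fin T} {a : Fin T → ∀ j, A j} (ho : othersWeight Q1 Qk g i t a ≠ 0)
    (hZ : ∀ u, typeWeight Q1 Qk (update g i (sStrat N T X A Q1 Qk g i)) i t a u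
      = typeWeight Q1 Qk g i t a u) (u : X i) (b : A i) :
    typeActionWeight Q1 Qk (update g i (sStrat N T X A Q1 Qk g i)) i t a u b
      = typeActionWeight Q1 Qk g i t a u b := by
  set c := typeActionWeight Q1 Qk g i t a u b / typeWeight Q1 Qk g i t a u
  calc _ = ∑ xi ∈ univ.filter (fun xi : Fin T → X i => xi t = u),
        playerWeight Q1 Qk (update g i (sStrat N T X A Q1 Qk g i)) i t xi a * c :=
        Finset.sum_congr rfl fun xi hxi => by
          rw [update_self, sStrat_eq_div hg hc hK i t a ho, (mem_filter.1 hxi).2]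
    _ = c * typeWeight Q1 Qk (update g i (sStrat N T X A Q1 Qk g i)) i t a u := by
        rw [typeWeight, Finset.mul_sum]
        exact Finset.sum_congr rfl fun _ _ => mul_comm _ _
    _ = typeActionWeight Q1 Qk g i t a u b / typeWeight Q1 Qk g i t a u *
          typeWeight Q1 Qk g i t a u := by rw [hZ]
    _ = _ := div_mul_cancel_of_imp fun hz =>
        typeActionWeight_eq_zero_of_typeWeight_eq_zero hg.nonneg hK hz b

theorem typeWeight_update_eq [∀ j, Nonempty (X j)] {g : Strat N T X A}
    (hg : Stochastic N T X A g) (hc : Causal N T X A g) (hK : StochKer N T X A Q1 Qk) (i : Fin N) :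
    ∀ (t : Fin T) a, othersWeight Q1 Qk g i t a ≠ 0 → ∀ u,
      typeWeight Q1 Qk (update g i (sStrat N T X A Q1 Qk g i)) i t a u
        = typeWeight Q1 Qk g i t a u := by
  rintro ⟨n, hn⟩
  induction n with
  | zero => exact fun a _ u => typeWeight_congr_of_val_eq_zero _ _ i rfl a u
  | succ n ih =>
    intro a ho y
    have hn' : n < T := by omega
    have hY := typeActionWeight_update_eq hg hc hK
      (othersWeight_ne_zero_of_succ hg hK i (t := ⟨n, hn'⟩) ho) (ih hn' a
        (othersWeight_ne_zero_of_succ hg hK i (t := ⟨n, hn'⟩) ho))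
    refine mul_left_cancel₀ (Nat.cast_ne_zero.2 (Fintype.card_ne_zero (α := X i))) ?_
    rw [card_mul_typeWeight_succ (causal_update_sStrat hc i) i (t := ⟨n, hn'⟩) hn,
      card_mul_typeWeight_succ hc i (t := ⟨n, hn'⟩) hn]
    simp only [hY]

theorem stochasticOnSupport_update [∀ j, Nonempty (X j)] {g : Strat N T X A}
    (hg : Stochastic N T X A g) (hc : Causal N T X A g) (hK : StochKer N T X A Q1 Qk) (i : Fin N) :
    StochasticOnSupport Q1 Qk (update g i (sStrat N T X A Q1 Qk g i)) := by
  intro t x a hw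
  have hgnn := playerWeight_nonneg (Q1 := Q1) hg.nonneg hK
  have hw' := fun j => Finset.prod_ne_zero_iff.1 hw j (mem_univ j)
  have ho : othersWeight Q1 Qk g i t a ≠ 0 := Finset.prod_ne_zero_iff.2 fun j hj hz => by
    rw [Finset.sum_eq_zero_iff_of_nonneg fun xj _ => hgnn j t xj a] at hz
    exact hw' j ((playerWeight_congr_strategy (update_of_ne (ne_of_mem_erase hj) _ _) _ _ _).trans
      (hz _ (mem_univ _)))
  have hz : typeWeight Q1 Qk g i t a (x t i) ≠ 0 := fun hz => by
    rw [← typeWeight_update_eq hg hc hK i t a ho, typeWeight,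
      Finset.sum_eq_zero_iff_of_nonneg fun xj _ =>
        playerWeight_nonneg (update_sStrat_nonneg hg hK i) hK i t xj a] at hz
    exact hw' i (hz _ (by simp))
  simp only [actionProb]
  rw [← Fintype.prod_sum]
  refine Finset.prod_eq_one fun j _ => ?_
  by_cases hj : j = i
  · subst hj
    simp only [update_self, sStrat_eq_div hg hc hK _ t a ho, ← Finset.sum_div,
      sum_typeActionWeight hg]
    exact div_self hz
  · simp only [update_of_ne hj]
    exact (hg _ _ _ _).2

theorem prod_typeActionWeight_update [∀ j, Nonempty (X j)] {g : Strat N T X A}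
    (hg : Stochastic N T X A g) (hc : Causal N T X A g) (hK : StochKer N T X A Q1 Qk) (i : Fin N)
    (t : Fin T) (a : Fin T → ∀ j, A j) (v : ∀ j, X j) (β : ∀ j, A j) :
    ∏ j, typeActionWeight Q1 Qk (update g i (sStrat N T X A Q1 Qk g i)) j t a (v j) (β j)
      = ∏ j, typeActionWeight Q1 Qk g j t a (v j) (β j) := by
  have hne : ∀ j ≠ i,
      typeActionWeight Q1 Qk (update g i (sStrat N T X A Q1 Qk g i)) j t a (v j) (β j)
        = typeActionWeight Q1 Qk g j t a (v j) (β j) := fun j hj =>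
    typeActionWeight_congr_strategy (update_of_ne hj _ _) t a _ _
  by_cases ho : othersWeight Q1 Qk g i t a = 0
  · obtain ⟨j, hj, hzj⟩ := Finset.prod_eq_zero_iff.1 ho
    rw [Finset.sum_eq_zero_iff_of_nonneg fun xj _ =>
      playerWeight_nonneg hg.nonneg hK j t xj a] at hzj
    have hzero : typeActionWeight Q1 Qk g j t a (v j) (β j) = 0 :=
      Finset.sum_eq_zero fun xj _ => by rw [hzj xj (mem_univ _), zero_mul]
    rw [Finset.prod_eq_zero (mem_univ j) ((hne j (ne_of_mem_erase hj)).trans hzero),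
      Finset.prod_eq_zero (mem_univ j) hzero]
  · refine Finset.prod_congr rfl fun j _ => ?_
    by_cases hj : j = i
    · subst hj
      exact typeActionWeight_update_eq hg hc hK ho (typeWeight_update_eq hg hc hK j t a ho) _ _
    · exact hne j hj

theorem margXA_update_eq {g : Strat N T X A} (hg : Stochastic N T X A g) (hc : Causal N T X A g)
    (hK : StochKer N T X A Q1 Qk) (i : Fin N) (t : Fin T) (v : ∀ j, X j) (β : ∀ j, A j) :
    margXA N T X A Q1 Qk (update g i (sStrat N T X A Q1 Qk g i)) t v β
      = margXA N T X A Q1 Qk g t v β := by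
  have : ∀ j, Nonempty (X j) := fun j => ⟨v j⟩
  have : Nonempty (∀ j, A j) := ⟨β⟩
  refine mul_left_cancel₀ (pow_ne_zero (T - 1 - t) (Nat.cast_ne_zero.2 (mul_ne_zero
    (Fintype.card_ne_zero (α := ∀ j, X j)) (Fintype.card_ne_zero (α := ∀ j, A j))))) ?_
  rw [card_pow_mul_margXA (causal_update_sStrat hc i) (stochasticOnSupport_update hg hc hK i) hK,
    card_pow_mul_margXA hc (stochasticOnSupport_of_stochastic hg) hK]
  simp only [prod_typeActionWeight_update hg hc hK]

theorem Jval_eq_sum_margXA (h : Strat N T X A) (R : ∀ _ : Fin N, (∀ j, X j) → (∀ j, A j) → ℝ)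
    (i : Fin N) :
    Jval N T X A Q1 Qk h R i = ∑ t, ∑ v, ∑ β, R i v β * margXA N T X A Q1 Qk h t v β := by
  have hfiber : ∀ t x a, ∑ v, ∑ β, (if x t = v ∧ a t = β then R i v β * trajP N T X A Q1 Qk h x a
      else 0) = trajP N T X A Q1 Qk h x a * R i (x t) (a t) := fun t x a => by
    simp [ite_and, mul_comm]
  set F := fun t x a v β => if x t = v ∧ a t = β then R i v β * trajP N T X A Q1 Qk h x a else 0
  calc Jval N T X A Q1 Qk h R i = ∑ x, ∑ a, ∑ t, ∑ v, ∑ β, F t x a v β := by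
        simp only [Jval, Finset.mul_sum, F, hfiber]
    _ = ∑ t, ∑ x, ∑ a, ∑ v, ∑ β, F t x a v β := by
        exact (Finset.sum_congr rfl fun _ _ => Finset.sum_comm).trans Finset.sum_comm
    _ = _ := by
        simp only [margXA, Finset.mul_sum, mul_ite, mul_zero, F]
        exact Finset.sum_congr rfl fun _ _ =>
          ((Finset.sum_congr rfl fun _ _ => Finset.sum_comm).trans Finset.sum_comm).trans
            (Finset.sum_congr rfl fun _ _ => (Finset.sum_congr rfl fun _ _ => Finset.sum_comm).trans
              Finset.sum_comm)

end Model

/-- sufficiency of the current type: replacing player `i`'s strategy by the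
structured strategy `s^i` derived from `g` leaves all joint `(x_t, a_t)` distributions,
and hence all total expected rewards, unchanged. -/
theorem structured_strategy_sufficiency
    (g : Strat N T X A) (i : Fin N)
    (R : ∀ _ : Fin N, (∀ j, X j) → (∀ j, A j) → ℝ)
    (hK : StochKer N T X A Q1 Qk)
    (hg : Stochastic N T X A g) (hc : Causal N T X A g) :
    (∀ (τ : Fin T) (x : ∀ j, X j) (av : ∀ j, A j),
      margXA N T X A Q1 Qk (Function.update g i (sStrat N T X A Q1 Qk g i)) τ x av
        = margXA N T X A Q1 Qk g τ x av) ∧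
    Jval N T X A Q1 Qk (Function.update g i (sStrat N T X A Q1 Qk g i)) R i
      = Jval N T X A Q1 Qk g R i := by
  have hmarg := margXA_update_eq hg hc hK i
  refine ⟨hmarg, ?_⟩
  simp only [Jval_eq_sum_margXA, hmarg]

end DynGame
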